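/- Let A, B ∈ ℝ^{n×n} be symmetric positive semidefinite matrices. Then the characteristic polynomial of A·B equals the characteristic polynomial of A^{1/2}·B·A^{1/2} (so A·B and A^{1/2}·B·A^{1/2} have the same eigenvalues with multiplicity). Moreover, if A is positive definite, then the matrix M := A^{1/2}·(A^{1/2} B A^{1/2})^{1/2}·A^{−1/2} satisfies M·M = A·B and tr(M) = tr((A^{1/2} B A^{1/2})^{1/2}); in particular tr((AB)^{1/2}) = tr((A^{1/2} B A^{1/2})^{1/2}). -/

import Mathlib

open Matrix
open scoped Classical

section Aux

open Polynomial

lemma eval_charpoly' {n : ℕ} (M : Matrix (Fin n) (Fin n) ℝ) (x : ℝ) :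
    M.charpoly.eval x = (x • (1 : Matrix (Fin n) (Fin n) ℝ) - M).det := by
  rw [Matrix.charpoly, ← Polynomial.coe_evalRingHom, RingHom.map_det]
  congr 1
  ext i j
  by_cases h : i = j <;>
    simp [h, charmatrix_apply_eq, charmatrix_apply_ne, Matrix.one_apply, Matrix.sub_apply,
      Matrix.smul_apply]

lemma det_smul_one_sub_mul_comm {n : ℕ} (P Q : Matrix (Fin n) (Fin n) ℝ) (x : ℝ) :
    (x • (1 : Matrix (Fin n) (Fin n) ℝ) - P * Q).det
      = (x • (1 : Matrix (Fin n) (Fin n) ℝ) - Q * P).det := by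
  rcases eq_or_ne x 0 with rfl | hx
  · simp [Matrix.det_neg, Matrix.det_mul_comm P Q]
  · have h1 : x • (1 : Matrix (Fin n) (Fin n) ℝ) - P * Q
        = x • ((1 : Matrix (Fin n) (Fin n) ℝ) - P * (x⁻¹ • Q)) := by
      rw [smul_sub, Matrix.mul_smul, smul_smul, mul_inv_cancel₀ hx, one_smul]
    have h2 : x • (1 : Matrix (Fin n) (Fin n) ℝ) - Q * P
        = x • ((1 : Matrix (Fin n) (Fin n) ℝ) - (x⁻¹ • Q) * P) := by
      rw [smul_sub, Matrix.smul_mul, smul_smul, mul_inv_cancel₀ hx, one_smul]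
    rw [h1, h2, Matrix.det_smul, Matrix.det_smul, Matrix.det_one_sub_mul_comm]

lemma charpoly_mul_comm' {n : ℕ} (P Q : Matrix (Fin n) (Fin n) ℝ) :
    (P * Q).charpoly = (Q * P).charpoly := by
  apply Polynomial.funext
  intro x
  rw [eval_charpoly', eval_charpoly', det_smul_one_sub_mul_comm]

end Aux

/-- The positive semidefinite square root of a matrix (junk value `0` if the matrix is not
positive semidefinite). -/
noncomputable def psdSqrt {n : ℕ} (A : Matrix (Fin n) (Fin n) ℝ) : Matrix (Fin n) (Fin n) ℝ :=
  if h : A.PosSemidef then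
    (h.1.eigenvectorUnitary : Matrix (Fin n) (Fin n) ℝ) *
      diagonal ((↑) ∘ (√·) ∘ h.1.eigenvalues) *
      (star h.1.eigenvectorUnitary : Matrix (Fin n) (Fin n) ℝ)
  else 0

noncomputable def Matrix.PosSemidef.sqrt {n : ℕ} {A : Matrix (Fin n) (Fin n) ℝ}
    (h : A.PosSemidef) : Matrix (Fin n) (Fin n) ℝ :=
  (h.1.eigenvectorUnitary : Matrix (Fin n) (Fin n) ℝ) *
    diagonal ((↑) ∘ (√·) ∘ h.1.eigenvalues) *
    (star h.1.eigenvectorUnitary : Matrix (Fin n) (Fin n) ℝ)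

lemma Matrix.PosSemidef.posSemidef_sqrt {n : ℕ} {A : Matrix (Fin n) (Fin n) ℝ}
    (h : A.PosSemidef) : h.sqrt.PosSemidef := by
  have hd : (diagonal ((↑) ∘ (√·) ∘ h.1.eigenvalues) : Matrix (Fin n) (Fin n) ℝ).PosSemidef :=
    posSemidef_diagonal_iff.mpr fun i => by simp [Real.sqrt_nonneg]
  have := hd.mul_mul_conjTranspose_same (h.1.eigenvectorUnitary : Matrix (Fin n) (Fin n) ℝ)
  unfold Matrix.PosSemidef.sqrt
  convert this using 2
  exact star_eq_conjTranspose _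

lemma Matrix.PosSemidef.sqrt_mul_self {n : ℕ} {A : Matrix (Fin n) (Fin n) ℝ}
    (h : A.PosSemidef) : h.sqrt * h.sqrt = A := by
  have hU : (star h.1.eigenvectorUnitary : Matrix (Fin n) (Fin n) ℝ) *
      (h.1.eigenvectorUnitary : Matrix (Fin n) (Fin n) ℝ) = 1 := Unitary.coe_star_mul_self _
  have hD : (diagonal ((↑) ∘ (√·) ∘ h.1.eigenvalues) : Matrix (Fin n) (Fin n) ℝ) *
      diagonal ((↑) ∘ (√·) ∘ h.1.eigenvalues) = diagonal (RCLike.ofReal ∘ h.1.eigenvalues) := by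
    rw [diagonal_mul_diagonal]
    congr 1
    funext i
    simp [Real.mul_self_sqrt (h.eigenvalues_nonneg i)]
  conv_rhs => rw [h.1.spectral_theorem, Unitary.conjStarAlgAut_apply]
  unfold Matrix.PosSemidef.sqrt
  calc _ = (h.1.eigenvectorUnitary : Matrix (Fin n) (Fin n) ℝ) *
        (diagonal ((↑) ∘ (√·) ∘ h.1.eigenvalues) *
          ((star h.1.eigenvectorUnitary : Matrix (Fin n) (Fin n) ℝ) *
            (h.1.eigenvectorUnitary : Matrix (Fin n) (Fin n) ℝ)) *
          diagonal ((↑) ∘ (√·) ∘ h.1.eigenvalues)) *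
        (star h.1.eigenvectorUnitary : Matrix (Fin n) (Fin n) ℝ) := by
          simp only [Matrix.mul_assoc]
    _ = _ := by rw [hU, Matrix.mul_one, hD]

/-- For symmetric positive semidefinite `A B ∈ ℝ^{n×n}`, the matrices `A·B` and
`A^{1/2}·B·A^{1/2}` have the same characteristic polynomial.  Moreover, if `A` is positive
definite, then `M := A^{1/2}·(A^{1/2} B A^{1/2})^{1/2}·A^{−1/2}` satisfies `M·M = A·B` and
`tr M = tr((A^{1/2} B A^{1/2})^{1/2})`; in particular `tr((AB)^{1/2}) = tr((A^{1/2} B A^{1/2})^{1/2})`. -/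
theorem stmt_4 {n : ℕ} (A B : Matrix (Fin n) (Fin n) ℝ)
    (hA : A.PosSemidef) (hB : B.PosSemidef) :
    (A * B).charpoly = (psdSqrt A * B * psdSqrt A).charpoly ∧
      (A.PosDef →
        (psdSqrt A * psdSqrt (psdSqrt A * B * psdSqrt A) * (psdSqrt A)⁻¹) *
            (psdSqrt A * psdSqrt (psdSqrt A * B * psdSqrt A) * (psdSqrt A)⁻¹) = A * B ∧
          (psdSqrt A * psdSqrt (psdSqrt A * B * psdSqrt A) * (psdSqrt A)⁻¹).trace =
            (psdSqrt (psdSqrt A * B * psdSqrt A)).trace) := by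
  have hsA : psdSqrt A = hA.sqrt := dif_pos hA
  have hsAps : (hA.sqrt).PosSemidef := hA.posSemidef_sqrt
  have hsq : hA.sqrt * hA.sqrt = A := hA.sqrt_mul_self
  have hS : (psdSqrt A * B * psdSqrt A).PosSemidef := by
    rw [hsA]
    have := hB.mul_mul_conjTranspose_same hA.sqrt
    rwa [hsAps.isHermitian.eq] at this
  have hS' : (hA.sqrt * B * hA.sqrt).PosSemidef := hsA ▸ hS
  have hsS : psdSqrt (hA.sqrt * B * hA.sqrt) = hS'.sqrt := dif_pos hS'
  constructor
  · have hAB : A * B = hA.sqrt * (hA.sqrt * B) := by rw [← Matrix.mul_assoc, hsq]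
    rw [hsA, hAB, _root_.charpoly_mul_comm' hA.sqrt (hA.sqrt * B), Matrix.mul_assoc]
  · intro hAd
    have hdet : IsUnit (hA.sqrt).det := by
      have : (hA.sqrt).det * (hA.sqrt).det = A.det := by rw [← Matrix.det_mul, hsq]
      have hAdet : A.det ≠ 0 := ne_of_gt hAd.det_pos
      refine isUnit_iff_ne_zero.mpr fun h => hAdet ?_
      rw [← this, h, zero_mul]
    have hinv : (hA.sqrt)⁻¹ * hA.sqrt = 1 := Matrix.nonsing_inv_mul _ hdet
    have hSsq : hS'.sqrt * hS'.sqrt = hA.sqrt * B * hA.sqrt := hS'.sqrt_mul_self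
    constructor
    · rw [hsA, hsS]
      calc hA.sqrt * hS'.sqrt * (hA.sqrt)⁻¹ * (hA.sqrt * hS'.sqrt * (hA.sqrt)⁻¹)
          = hA.sqrt * (hS'.sqrt * (((hA.sqrt)⁻¹ * hA.sqrt) * (hS'.sqrt * (hA.sqrt)⁻¹))) := by
            simp only [Matrix.mul_assoc]
        _ = hA.sqrt * (hS'.sqrt * hS'.sqrt) * (hA.sqrt)⁻¹ := by
            rw [hinv, Matrix.one_mul]; simp only [Matrix.mul_assoc]
        _ = A * B := by
            rw [hSsq, ← Matrix.mul_assoc, ← Matrix.mul_assoc, hsq, Matrix.mul_assoc,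
              Matrix.mul_assoc, Matrix.mul_nonsing_inv _ hdet, Matrix.mul_one]
    · rw [hsA, hsS, Matrix.mul_assoc, Matrix.trace_mul_comm, Matrix.mul_assoc, hinv,
        Matrix.mul_one]
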